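/- arXiv:1203.5497 — 2 statements merged into one kernel-verified Lean document; each statement's English description precedes it below -/
import Mathlib

section
/- Let (X, ‖·‖) be a real normed space. If the function x ↦ ‖x‖² is strongly convex with modulus 1 (i.e., ‖tx+(1-t)y‖² ≤ t‖x‖² + (1-t)‖y‖² - t(1-t)‖x-y‖² for all x, y ∈ X and t ∈ [0,1]), then the norm satisfies the parallelogram law ‖u+v‖² + ‖u-v‖² = 2‖u‖² + 2‖v‖² for all u, v ∈ X, and hence X is an inner product space. -/
theorem strongly_convex_norm_sq_implies_parallelogram
    {X : Type*} [NormedAddCommGroup X] [NormedSpace ℝ X]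
    (h : ∀ x y : X, ∀ t ∈ Set.Icc (0:ℝ) 1,
      ‖t • x + (1 - t) • y‖ ^ 2 ≤
        t * ‖x‖ ^ 2 + (1 - t) * ‖y‖ ^ 2 - t * (1 - t) * ‖x - y‖ ^ 2) :
    (∀ u v : X, ‖u + v‖ ^ 2 + ‖u - v‖ ^ 2 = 2 * ‖u‖ ^ 2 + 2 * ‖v‖ ^ 2) ∧
      InnerProductSpaceable X := by
  have key : ∀ u v : X, ‖u + v‖ ^ 2 + ‖u - v‖ ^ 2 ≤ 2 * ‖u‖ ^ 2 + 2 * ‖v‖ ^ 2 := by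
    intro u v
    have h1 := h u v (1/2) (by constructor <;> norm_num)
    have e0 : ((1:ℝ) - 1/2) • v = (1/2 : ℝ) • v := by norm_num
    rw [e0, ← smul_add] at h1
    rw [norm_smul] at h1
    simp only [Real.norm_eq_abs] at h1
    rw [mul_pow] at h1
    have : |(1/2 : ℝ)| ^ 2 = 1/4 := by norm_num
    rw [this] at h1
    nlinarith [h1]
  have eq : ∀ u v : X, ‖u + v‖ ^ 2 + ‖u - v‖ ^ 2 = 2 * ‖u‖ ^ 2 + 2 * ‖v‖ ^ 2 := by
    intro u v
    have h1 := key u v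
    have h2 := key (u + v) (u - v)
    have e1 : u + v + (u - v) = (2:ℝ) • u := by
      rw [two_smul]; abel
    have e2 : u + v - (u - v) = (2:ℝ) • v := by
      rw [two_smul]; abel
    rw [e1, e2, norm_smul, norm_smul] at h2
    simp only [Real.norm_eq_abs] at h2
    rw [mul_pow, mul_pow] at h2
    have : |(2 : ℝ)| ^ 2 = 4 := by norm_num
    rw [this] at h2
    nlinarith [h1, h2]
  refine ⟨eq, ⟨fun x y => ?_⟩⟩
  have := eq x y
  nlinarith [this, sq_nonneg (‖x + y‖), sq_nonneg (‖x - y‖)]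
end

section
/- If f: [a,b] → ℝ is strongly convex with modulus c > 0 and integrable, then f((a+b)/2) + (c/12)(b-a)² ≤ (1/(b-a)) ∫_a^b f(x) dx ≤ (f(a)+f(b))/2 - (c/6)(b-a)². -/
set_option maxHeartbeats 1000000

open MeasureTheory intervalIntegral

theorem hermite_hadamard_strongly_convex
    (a b c : ℝ) (f : ℝ → ℝ) (hc : 0 < c) (hab : a < b)
    (hf : ∀ x ∈ Set.Icc a b, ∀ y ∈ Set.Icc a b, ∀ t ∈ Set.Icc (0:ℝ) 1,
      f (t * x + (1 - t) * y) ≤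
        t * f x + (1 - t) * f y - c * t * (1 - t) * (x - y) ^ 2)
    (hint : IntervalIntegrable f MeasureTheory.volume a b) :
    f ((a + b) / 2) + c / 12 * (b - a) ^ 2 ≤ (1 / (b - a)) * ∫ x in a..b, f x ∧
      (1 / (b - a)) * ∫ x in a..b, f x ≤ (f a + f b) / 2 - c / 6 * (b - a) ^ 2 := by
  have hba : (0:ℝ) < b - a := by linarith
  have hba' : b - a ≠ 0 := ne_of_gt hba
  have hrefl : IntervalIntegrable (fun x => f (a + b - x)) volume a b := by
    have := hint.comp_sub_left (a + b)
    simpa using this.symm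
  constructor
  · -- left inequality
    have key : ∀ x ∈ Set.Icc a b,
        f ((a + b) / 2) + c / 4 * (2 * x - a - b) ^ 2 ≤ (f x + f (a + b - x)) / 2 := by
      intro x hx
      have hx' : a + b - x ∈ Set.Icc a b := by
        constructor
        · linarith [hx.2]
        · linarith [hx.1]
      have h := hf x hx (a + b - x) hx' (1/2) (by norm_num)
      have e1 : (1/2 : ℝ) * x + (1 - 1/2) * (a + b - x) = (a + b) / 2 := by ring
      rw [e1] at h
      nlinarith [h]
    have hmono := intervalIntegral.integral_mono_on (μ := volume) hab.le
      (f := fun x => f ((a + b) / 2) + c / 4 * (2 * x - a - b) ^ 2)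
      (g := fun x => (f x + f (a + b - x)) / 2)
      (by apply Continuous.intervalIntegrable; fun_prop)
      (by simpa using (hint.add hrefl).div_const 2) key
    have hI1 : (∫ x in a..b, (f ((a + b) / 2) + c / 4 * (2 * x - a - b) ^ 2))
        = (b - a) * f ((a + b) / 2) + c / 12 * (b - a) ^ 3 := by
      rw [intervalIntegral.integral_add (by apply Continuous.intervalIntegrable; fun_prop)
        (by apply Continuous.intervalIntegrable; fun_prop)]
      rw [intervalIntegral.integral_const]
      have h2 : (∫ x in a..b, c / 4 * (2 * x - a - b) ^ 2)
          = c / 4 * ∫ x in a..b, (2 * x - a - b) ^ 2 := by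
        rw [← intervalIntegral.integral_const_mul]
      rw [h2]
      have hpoly : (∫ x in a..b, (2 * x - a - b) ^ 2) = (b - a) ^ 3 / 3 := by
        have e : ∀ x : ℝ, (2 * x - a - b) ^ 2
            = 4 * x ^ 2 - (4 * (a + b)) * x + (a + b) ^ 2 := fun x => by ring
        simp_rw [e]
        rw [intervalIntegral.integral_add (by apply Continuous.intervalIntegrable; fun_prop)
          (by apply Continuous.intervalIntegrable; fun_prop),
          intervalIntegral.integral_sub (by apply Continuous.intervalIntegrable; fun_prop)
          (by apply Continuous.intervalIntegrable; fun_prop),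
          intervalIntegral.integral_const, intervalIntegral.integral_const_mul,
          intervalIntegral.integral_const_mul, integral_pow, integral_id]
        simp only [smul_eq_mul]
        ring
      rw [hpoly]; simp [smul_eq_mul]; ring
    have hI2 : (∫ x in a..b, (f x + f (a + b - x)) / 2) = ∫ x in a..b, f x := by
      rw [intervalIntegral.integral_div, intervalIntegral.integral_add hint hrefl]
      have h3 : (∫ x in a..b, f (a + b - x)) = ∫ x in a..b, f x := by
        rw [intervalIntegral.integral_comp_sub_left f (a + b)]
        norm_num
      rw [h3]; ring
    rw [hI1, hI2] at hmono
    rw [one_div, ← div_eq_inv_mul, le_div_iff₀ hba]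
    nlinarith [hmono]
  · -- right inequality
    set g : ℝ → ℝ := fun x => (f b - f a) / (b - a) * x + (b * f a - a * f b) / (b - a)
      + c * x ^ 2 - c * (a + b) * x + c * (a * b) with hg
    have key : ∀ x ∈ Set.Icc a b, f x ≤ g x := by
      intro x hx
      set t : ℝ := (b - x) / (b - a) with ht
      have ht0 : 0 ≤ t := div_nonneg (by linarith [hx.2]) hba.le
      have ht1 : t ≤ 1 := by
        rw [ht, div_le_one hba]; linarith [hx.1]
      have h := hf a ⟨le_refl a, hab.le⟩ b ⟨hab.le, le_refl b⟩ t ⟨ht0, ht1⟩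
      have e1 : t * a + (1 - t) * b = x := by
        rw [ht]; field_simp; ring
      have e2 : t * f a + (1 - t) * f b - c * t * (1 - t) * (a - b) ^ 2 = g x := by
        rw [ht, hg]; field_simp; ring
      rw [e1, e2] at h
      exact h
    have hgint : IntervalIntegrable g volume a b := by
      apply Continuous.intervalIntegrable; rw [hg]; fun_prop
    have hmono := intervalIntegral.integral_mono_on (μ := volume) hab.le hint hgint key
    have hIg : (∫ x in a..b, g x)
        = ((f a + f b) / 2 - c / 6 * (b - a) ^ 2) * (b - a) := by
      rw [hg]
      beta_reduce
      rw [intervalIntegral.integral_add, intervalIntegral.integral_sub,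
        intervalIntegral.integral_add, intervalIntegral.integral_add,
        intervalIntegral.integral_const, intervalIntegral.integral_const,
        intervalIntegral.integral_const_mul, intervalIntegral.integral_const_mul,
        intervalIntegral.integral_const_mul, integral_pow, integral_id]
      · push_cast
        field_simp
        linear_combination (36 * f a * b - 36 * f b * a) * (b - a) * mul_inv_cancel₀ hba'
      all_goals apply Continuous.intervalIntegrable; fun_prop
    rw [hIg] at hmono
    rw [one_div, ← div_eq_inv_mul, div_le_iff₀ hba]
    exact hmono
end
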